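/- For a symmetric polynomial f ∈ ℝ⟨X_1,...,X_n⟩ (f* = f), the following are equivalent: (i) tr(f(A_1,...,A_n)) ≥ 0 for all s ∈ ℕ and all symmetric matrices A_i ∈ ℝ^{s×s}; (ii) tr(f(A_1,...,A_n)) ≥ 0 for all s ∈ ℕ and all self-adjoint matrices A_i ∈ ℂ^{s×s}. -/

import Mathlib

abbrev NCPoly (k : Type) [CommSemiring k] (n : ℕ) := MonoidAlgebra k (FreeMonoid (Fin n))

noncomputable def ncWord (k : Type) [CommSemiring k] {n : ℕ} (w : FreeMonoid (Fin n)) : NCPoly k n :=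
  MonoidAlgebra.of k (FreeMonoid (Fin n)) w

noncomputable def ncX (k : Type) [CommSemiring k] {n : ℕ} (i : Fin n) : NCPoly k n :=
  ncWord k (FreeMonoid.of i)

/-- The involution on `k⟨X⟩` fixing the variables and conjugating coefficients. -/
noncomputable def ncStar {k : Type} [CommSemiring k] [StarRing k] {n : ℕ} (f : NCPoly k n) : NCPoly k n :=
  MonoidAlgebra.ofCoeff (Finsupp.mapDomain FreeMonoid.reverse (Finsupp.mapRange star (star_zero k) f.coeff))

/-- `f` and `g` are cyclically equivalent: `f - g` is a sum of commutators. -/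
def IsCyclicEquiv {k : Type} [CommRing k] {n : ℕ} (f g : NCPoly k n) : Prop :=
  f - g ∈ AddSubmonoid.closure {x : NCPoly k n | ∃ p q, x = p * q - q * p}

/-- The quadratic module generated by the `1 - X_i^2`: all finite sums of
elements `g* g` and `g* (1 - X_i^2) g`. -/
noncomputable def QuadMod (k : Type) [CommRing k] [StarRing k] (n : ℕ) : AddSubmonoid (NCPoly k n) :=
  AddSubmonoid.closure
    ({x | ∃ g : NCPoly k n, x = ncStar g * g} ∪
     {x | ∃ (g : NCPoly k n) (i : Fin n), x = ncStar g * (1 - (ncX k i) ^ 2) * g})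

/-- Evaluation of a noncommutative polynomial at a tuple of matrices. -/
noncomputable def ncEval {k : Type} [CommRing k] {n s : ℕ}
    (A : Fin n → Matrix (Fin s) (Fin s) k) :
    NCPoly k n →ₐ[k] Matrix (Fin s) (Fin s) k :=
  MonoidAlgebra.lift k (Matrix (Fin s) (Fin s) k) (FreeMonoid (Fin n)) (FreeMonoid.lift A)

/-- A self-adjoint contraction matrix: `A* = A` and `1 - A²` positive semidefinite. -/
def IsSAContraction {k : Type} [CommRing k] [StarRing k] [PartialOrder k] [StarOrderedRing k]
    {s : ℕ} (A : Matrix (Fin s) (Fin s) k) : Prop :=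
  A.IsHermitian ∧ (1 - A * A).PosSemidef

/-- The natural inclusion `ℝ⟨X⟩ → ℂ⟨X⟩`. -/
noncomputable def toC {n : ℕ} : NCPoly ℝ n →ₐ[ℝ] NCPoly ℂ n :=
  MonoidAlgebra.lift ℝ (NCPoly ℂ n) (FreeMonoid (Fin n)) (MonoidAlgebra.of ℂ (FreeMonoid (Fin n)))

/-!
(ii) ⟹ (i): a real symmetric tuple is a complex Hermitian one, and evaluating `toC f` at it
gives the complexification of `f(A)`.

(i) ⟹ (ii): the `ℝ`-algebra embedding `ℂ → ℝ^{2×2}`, `a + ib ↦ [[a, -b], [b, a]]`, applied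
entrywise is an `ℝ`-algebra map `ℂ^{s×s} → ℝ^{2s×2s}` sending Hermitian matrices to symmetric
ones and the trace to twice its real part; it commutes with evaluating `f`. Since `f* = f`, the
trace of `f(A)` is real for Hermitian `A`, hence equals its real part.
-/

open Matrix ComplexConjugate

section Involution

variable {k : Type} [CommSemiring k] [StarRing k] {n : ℕ}

lemma ncStar_add (p q : NCPoly k n) : ncStar (p + q) = ncStar p + ncStar q := by
  simp only [ncStar, MonoidAlgebra.coeff_add]
  rw [Finsupp.mapRange_add star_add, Finsupp.mapDomain_add, MonoidAlgebra.ofCoeff_add]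

lemma ncStar_smul {R : Type} [Monoid R] [Star R] [DistribMulAction R k] [StarModule R k]
    (r : R) (p : NCPoly k n) : ncStar (r • p) = star r • ncStar p := by
  simp only [ncStar, MonoidAlgebra.coeff_smul]
  rw [Finsupp.mapRange_smul' r (star r) _ (star_smul r), Finsupp.mapDomain_smul,
    MonoidAlgebra.ofCoeff_smul]

lemma ncStar_ncWord (w : FreeMonoid (Fin n)) : ncStar (ncWord k w) = ncWord k w.reverse := by
  show MonoidAlgebra.ofCoeff (Finsupp.mapDomain FreeMonoid.reverse
      (Finsupp.mapRange star (star_zero k) (Finsupp.single w 1))) = _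
  rw [Finsupp.mapRange_single, Finsupp.mapDomain_single, star_one, MonoidAlgebra.ofCoeff_single]
  rfl

end Involution

lemma ncAlgHom_ext {k S : Type} [CommSemiring k] [Semiring S] [Algebra k S] {n : ℕ}
    {Φ Ψ : NCPoly k n →ₐ[k] S} (h : ∀ i, Φ (ncX k i) = Ψ (ncX k i)) : Φ = Ψ :=
  (MonoidAlgebra.lift k S (FreeMonoid (Fin n))).symm.injective (FreeMonoid.hom_eq h)

lemma conjTranspose_freeMonoidLift {k : Type} [Semiring k] [StarRing k] {n s : ℕ}
    {A : Fin n → Matrix (Fin s) (Fin s) k} (hA : ∀ i, (A i).IsHermitian)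
    (w : FreeMonoid (Fin n)) : (FreeMonoid.lift A w)ᴴ = FreeMonoid.lift A w.reverse := by
  induction w using FreeMonoid.recOn with
  | one => rw [map_one, conjTranspose_one]; exact (map_one _).symm
  | of_mul i w ih =>
    rw [map_mul, conjTranspose_mul, FreeMonoid.reverse_mul, map_mul, ih,
      FreeMonoid.reverse_of, FreeMonoid.lift_eval_of, (hA i).eq]

section Evaluation

variable {k : Type} [CommRing k] {n s : ℕ}

lemma ncEval_ncWord (A : Fin n → Matrix (Fin s) (Fin s) k) (w : FreeMonoid (Fin n)) :
    ncEval A (ncWord k w) = FreeMonoid.lift A w :=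
  MonoidAlgebra.lift_of _ _

lemma ncEval_ncX (A : Fin n → Matrix (Fin s) (Fin s) k) (i : Fin n) : ncEval A (ncX k i) = A i :=
  (ncEval_ncWord A _).trans (FreeMonoid.lift_eval_of _ _)

variable [StarRing k]

lemma conjTranspose_ncEval {A : Fin n → Matrix (Fin s) (Fin s) k} (hA : ∀ i, (A i).IsHermitian)
    (p : NCPoly k n) : (ncEval A p)ᴴ = ncEval A (ncStar p) := by
  induction p using MonoidAlgebra.induction_on with
  | of w =>
    change (ncEval A (ncWord k w))ᴴ = ncEval A (ncStar (ncWord k w))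
    rw [ncStar_ncWord, ncEval_ncWord, ncEval_ncWord, conjTranspose_freeMonoidLift hA]
  | add p q hp hq => rw [map_add, conjTranspose_add, hp, hq, ncStar_add, map_add]
  | smul r p hp => rw [map_smul, conjTranspose_smul, hp, ncStar_smul, map_smul]

lemma isSelfAdjoint_trace_ncEval {A : Fin n → Matrix (Fin s) (Fin s) k}
    (hA : ∀ i, (A i).IsHermitian) {p : NCPoly k n} (hp : ncStar p = p) :
    IsSelfAdjoint (trace (ncEval A p)) := by
  rw [IsSelfAdjoint, ← trace_conjTranspose, conjTranspose_ncEval hA, hp]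

end Evaluation

lemma toC_ncWord {n : ℕ} (w : FreeMonoid (Fin n)) : toC (ncWord ℝ w) = ncWord ℂ w :=
  MonoidAlgebra.lift_of _ _

lemma toC_ncX {n : ℕ} (i : Fin n) : toC (ncX ℝ i) = ncX ℂ i :=
  toC_ncWord _

lemma ncStar_toC {n : ℕ} (f : NCPoly ℝ n) : ncStar (toC f) = toC (ncStar f) := by
  induction f using MonoidAlgebra.induction_on with
  | of w =>
    change ncStar (toC (ncWord ℝ w)) = toC (ncStar (ncWord ℝ w))
    rw [toC_ncWord, ncStar_ncWord, ncStar_ncWord, toC_ncWord]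
  | add p q hp hq => rw [map_add, ncStar_add, hp, hq, ncStar_add, map_add]
  | smul r p hp => rw [map_smul, ncStar_smul, hp, ncStar_smul, map_smul]

lemma map_ncEval_toC {n s t : ℕ} (φ : Matrix (Fin s) (Fin s) ℂ →ₐ[ℝ] Matrix (Fin t) (Fin t) ℝ)
    (A : Fin n → Matrix (Fin s) (Fin s) ℂ) (f : NCPoly ℝ n) :
    φ (ncEval A (toC f)) = ncEval (fun i => φ (A i)) f := by
  have : φ.comp (((ncEval A).restrictScalars ℝ).comp toC) = ncEval (fun i => φ (A i)) :=
    ncAlgHom_ext fun i => by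
      simp only [AlgHom.comp_apply, AlgHom.restrictScalars_apply, toC_ncX, ncEval_ncX]
  exact congr($this f)

lemma ncEval_toC_map {n s t : ℕ} (φ : Matrix (Fin s) (Fin s) ℝ →ₐ[ℝ] Matrix (Fin t) (Fin t) ℂ)
    (A : Fin n → Matrix (Fin s) (Fin s) ℝ) (f : NCPoly ℝ n) :
    ncEval (fun i => φ (A i)) (toC f) = φ (ncEval A f) := by
  have : ((ncEval fun i => φ (A i)).restrictScalars ℝ).comp toC = φ.comp (ncEval A) :=
    ncAlgHom_ext fun i => by
      simp only [AlgHom.comp_apply, AlgHom.restrictScalars_apply, toC_ncX, ncEval_ncX]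
  exact congr($this f)

lemma Matrix.trace_reindex {R m l : Type*} [AddCommMonoid R] [Fintype m] [Fintype l]
    (e : m ≃ l) (M : Matrix m m R) : trace (reindex e e M) = trace M :=
  e.symm.sum_comp fun i => M i i

lemma Matrix.trace_comp {R m l : Type*} [AddCommMonoid R] [Fintype m] [Fintype l]
    (M : Matrix m m (Matrix l l R)) : trace (comp m m l l R M) = ∑ i, trace (M i i) :=
  Fintype.sum_prod_type _

lemma Complex.leftMulMatrix_basisOneI_conj (z : ℂ) :
    Algebra.leftMulMatrix basisOneI (conj z) = (Algebra.leftMulMatrix basisOneI z)ᵀ := by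
  simp only [Algebra.leftMulMatrix_complex, conj_re, conj_im, neg_neg]
  ext i j; fin_cases i <;> fin_cases j <;> rfl

/-- Entrywise `a + ib ↦ [[a, -b], [b, a]]`, flattened to a real `2s × 2s` matrix. -/
noncomputable def realRep (s : ℕ) :
    Matrix (Fin s) (Fin s) ℂ →ₐ[ℝ] Matrix (Fin (s * 2)) (Fin (s * 2)) ℝ :=
  ((reindexAlgEquiv ℝ ℝ finProdFinEquiv).toAlgHom.comp
    (compAlgEquiv (Fin s) (Fin 2) ℝ ℝ).toAlgHom).comp
    (Algebra.leftMulMatrix Complex.basisOneI).mapMatrix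

lemma realRep_eq_reindex_comp {s : ℕ} (M : Matrix (Fin s) (Fin s) ℂ) :
    realRep s M = reindex finProdFinEquiv finProdFinEquiv
      (comp _ _ _ _ ℝ (M.map (Algebra.leftMulMatrix Complex.basisOneI))) :=
  rfl

lemma Matrix.IsHermitian.realRep {s : ℕ} {M : Matrix (Fin s) (Fin s) ℂ} (hM : M.IsHermitian) :
    (realRep s M).IsHermitian := by
  rw [isHermitian_iff_isSymm, realRep_eq_reindex_comp, IsSymm, transpose_reindex,
    transpose_comp]
  congr 2
  ext i j : 1
  simp only [map_apply, transpose_apply, ← Complex.leftMulMatrix_basisOneI_conj, ← hM.apply i j,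
    Complex.star_def]

lemma trace_realRep {s : ℕ} (M : Matrix (Fin s) (Fin s) ℂ) :
    trace (realRep s M) = 2 * (trace M).re := by
  rw [realRep_eq_reindex_comp, trace_reindex, trace_comp, trace, Complex.re_sum, Finset.mul_sum]
  simp only [map_apply, ← Algebra.trace_eq_matrix_trace, Algebra.trace_complex_apply, diag]

theorem stmt13 {n : ℕ} (f : NCPoly ℝ n) (hf : ncStar f = f) :
    (∀ (s : ℕ) (A : Fin n → Matrix (Fin s) (Fin s) ℝ), (∀ i, (A i).IsHermitian) →
        0 ≤ Matrix.trace (ncEval A f)) ↔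
    (∀ (s : ℕ) (A : Fin n → Matrix (Fin s) (Fin s) ℂ), (∀ i, (A i).IsHermitian) →
        ∃ r : ℝ, 0 ≤ r ∧ Matrix.trace (ncEval A (toC f)) = (r : ℂ)) := by
  constructor
  · intro h s A hA
    have hreal : ((trace (ncEval A (toC f))).re : ℂ) = trace (ncEval A (toC f)) :=
      Complex.conj_eq_iff_re.mp (isSelfAdjoint_trace_ncEval hA (by rw [ncStar_toC, hf]))
    have hpos := h (s * 2) (fun i => realRep s (A i)) (fun i => (hA i).realRep)
    rw [← map_ncEval_toC, trace_realRep] at hpos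
    exact ⟨_, by linarith, hreal.symm⟩
  · intro h s A hA
    obtain ⟨r, hr, htr⟩ := h s (fun i => Complex.ofRealAm.mapMatrix (A i))
      fun i => (hA i).map _ fun x => (Complex.conj_ofReal x).symm
    rw [ncEval_toC_map, AlgHom.mapMatrix_apply, ← AddMonoidHom.map_trace] at htr
    rwa [← Complex.ofReal_injective htr] at hr
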